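/- Let 𝒜 be a symmetric Picard category. The assignment inv : 𝒜 ⥤ 𝒜 defined on objects by inv(a) = a^• and on morphisms by inv(f) = ((f⁻¹))^• is a functor, and it admits a braided (symmetric) strong monoidal structure whose structure morphism at a pair of objects (a, b) is the composite s_{a^•,b^•} ≫ κ_{b,a} : a^• ⊗ b^• ⟶ (a ⊗ b)^•, where s is the braiding of 𝒜. -/

import Mathlib

open CategoryTheory Category MonoidalCategory

universe v u

/-- A symmetric Picard category: a symmetric monoidal groupoid equipped with, for every
object `a`, a chosen object `dual a` and a chosen isomorphism `j a : 𝟙_ C ≅ dual a ⊗ a`. -/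
class SymmetricPicard (C : Type u) [Groupoid.{v} C] [MonoidalCategory C]
    [SymmetricCategory C] where
  dual : C → C
  j : ∀ a : C, 𝟙_ C ≅ dual a ⊗ a

namespace SymmetricPicard

variable {C : Type u} [Groupoid.{v} C] [MonoidalCategory C] [SymmetricCategory C]
  [SymmetricPicard C]

/-- The dual of a morphism `f : a ⟶ b`: the unique morphism `g : dual b ⟶ dual a`
such that `(j b).hom ≫ (g ⊗ inv f) = (j a).hom`. -/
noncomputable def dualHom {a b : C} (f : a ⟶ b) : dual b ⟶ dual a :=
  @Classical.epsilon _
    ⟨(ρ_ (dual b)).inv ≫ (dual b ◁ (j a).hom) ≫ (dual b ◁ (dual a ◁ f)) ≫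
      (α_ (dual b) (dual a) b).inv ≫ ((β_ (dual b) (dual a)).hom ▷ b) ≫
      (α_ (dual a) (dual b) b).hom ≫ (dual a ◁ (j b).inv) ≫ (ρ_ (dual a)).hom⟩
    (fun g => (j b).hom ≫ (g ⊗ₘ inv f) = (j a).hom)

/-- The canonical pairing `(a^• ⊗ b^•) ⊗ (b ⊗ a) ⟶ 𝟙`. -/
noncomputable def pairing (a b : C) : (dual a ⊗ dual b) ⊗ (b ⊗ a) ⟶ 𝟙_ C :=
  (α_ (dual a) (dual b) (b ⊗ a)).hom ≫ (𝟙 (dual a) ⊗ₘ (α_ (dual b) b a).inv) ≫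
    (𝟙 (dual a) ⊗ₘ ((j b).inv ⊗ₘ 𝟙 a)) ≫ (𝟙 (dual a) ⊗ₘ (λ_ a).hom) ≫ (j a).inv

/-- Laplaza's canonical arrow `κ_{a,b} : a^• ⊗ b^• ⟶ (b ⊗ a)^•`: the unique morphism `f`
such that `(f ⊗ 𝟙_{b⊗a}) ≫ j_{b⊗a}⁻¹` is the canonical pairing. -/
noncomputable def kappa (a b : C) : dual a ⊗ dual b ⟶ dual (b ⊗ a) :=
  @Classical.epsilon _
    ⟨(ρ_ (dual a ⊗ dual b)).inv ≫ ((dual a ⊗ dual b) ◁ (j (b ⊗ a)).hom) ≫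
      ((dual a ⊗ dual b) ◁ (β_ (dual (b ⊗ a)) (b ⊗ a)).hom) ≫
      (α_ (dual a ⊗ dual b) (b ⊗ a) (dual (b ⊗ a))).inv ≫
      (pairing a b ▷ dual (b ⊗ a)) ≫ (λ_ (dual (b ⊗ a))).hom⟩
    (fun f => (f ⊗ₘ 𝟙 (b ⊗ a)) ≫ (j (b ⊗ a)).inv = pairing a b)


/-- The action of the functor `inv` on morphisms: `inv(f) = (f⁻¹)^•`. -/
noncomputable def invMap {a b : C} (f : a ⟶ b) : dual a ⟶ dual b :=
  dualHom (inv f)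

/-- The monoidal structure morphism of `inv` at `(a, b)`: `s_{a^•,b^•} ≫ κ_{b,a}`. -/
noncomputable def invMu (a b : C) : dual a ⊗ dual b ⟶ dual (a ⊗ b) :=
  (β_ (dual a) (dual b)).hom ≫ kappa b a

end SymmetricPicard

/-!
Since `- ⊗ c` is an equivalence, a morphism `u : X ⟶ c^•` is determined by the pairing
`u ▷ c ≫ j_c⁻¹ : X ⊗ c ⟶ 𝟙`. Under this correspondence `inv(f)` becomes `a^• ◁ f⁻¹ ≫ j_a⁻¹`,
and the structure morphism `s ≫ κ` at `(a, b)` becomes the tensor product of the pairings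
`j_a⁻¹` and `j_b⁻¹` (composed with the middle-four interchange `tensorμ`). Each axiom of a
braided monoidal functor thereby reduces to an identity between tensor products of pairings,
valid in any symmetric monoidal category.
-/

namespace CategoryTheory.MonoidalCategory

open BraidedCategory

variable {C : Type u} [Category.{v} C] [MonoidalCategory C]

section Braided

variable [BraidedCategory C]

def tensorPairing {P Q A B : C} (e₁ : P ⊗ A ⟶ 𝟙_ C) (e₂ : Q ⊗ B ⟶ 𝟙_ C) :
    (P ⊗ Q) ⊗ (A ⊗ B) ⟶ 𝟙_ C :=
  tensorμ P Q A B ≫ (e₁ ⊗ₘ e₂) ≫ (λ_ (𝟙_ C)).hom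

lemma tensorHom_whiskerRight_tensorPairing {P P' Q Q' A B : C} (u : P' ⟶ P) (w : Q' ⟶ Q)
    (e₁ : P ⊗ A ⟶ 𝟙_ C) (e₂ : Q ⊗ B ⟶ 𝟙_ C) :
    (u ⊗ₘ w) ▷ (A ⊗ B) ≫ tensorPairing e₁ e₂ = tensorPairing (u ▷ A ≫ e₁) (w ▷ B ≫ e₂) := by
  rw [tensorPairing, tensorμ_natural_left_assoc, tensorHom_comp_tensorHom_assoc, tensorPairing]

lemma whiskerLeft_tensorHom_tensorPairing {P Q A A' B B' : C} (f : A' ⟶ A) (g : B' ⟶ B)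
    (e₁ : P ⊗ A ⟶ 𝟙_ C) (e₂ : Q ⊗ B ⟶ 𝟙_ C) :
    (P ⊗ Q) ◁ (f ⊗ₘ g) ≫ tensorPairing e₁ e₂ = tensorPairing (P ◁ f ≫ e₁) (Q ◁ g ≫ e₂) := by
  rw [tensorPairing, tensorμ_natural_right_assoc, tensorHom_comp_tensorHom_assoc, tensorPairing]

/-- Laplaza's canonical pairing `pairing a b` has this shape: the inner factors are paired
first, then the outer ones. -/
def nestedPairing {P Q A B : C} (e₁ : P ⊗ A ⟶ 𝟙_ C) (e₂ : Q ⊗ B ⟶ 𝟙_ C) :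
    (P ⊗ Q) ⊗ (B ⊗ A) ⟶ 𝟙_ C :=
  (α_ P Q (B ⊗ A)).hom ≫ P ◁ (α_ Q B A).inv ≫ P ◁ (e₂ ▷ A) ≫ P ◁ (λ_ A).hom ≫ e₁

lemma nestedPairing_eq {P Q A B : C} (e₁ : P ⊗ A ⟶ 𝟙_ C) (e₂ : Q ⊗ B ⟶ 𝟙_ C) :
    nestedPairing e₁ e₂ = (P ⊗ Q) ◁ (β_ B A).hom ≫ tensorPairing e₁ e₂ := by
  symm
  calc _ = 𝟙 _ ⊗≫ P ◁ ((β_ (Q ⊗ B) A).hom ≫ A ◁ e₂) ⊗≫ e₁ := by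
        simp only [tensorPairing, tensorμ, braiding_tensor_left_hom, tensorHom_def',
          unitors_equal]
        monoidal
    _ = 𝟙 _ ⊗≫ P ◁ (e₂ ▷ A ≫ (β_ (𝟙_ C) A).hom) ⊗≫ e₁ := by
        rw [← braiding_naturality_left]
    _ = nestedPairing e₁ e₂ := by
        rw [braiding_tensorUnit_left, nestedPairing]
        monoidal

lemma tensorPairing_assoc {P Q R A B D : C} (e₁ : P ⊗ A ⟶ 𝟙_ C) (e₂ : Q ⊗ B ⟶ 𝟙_ C)
    (e₃ : R ⊗ D ⟶ 𝟙_ C) :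
    ((P ⊗ Q) ⊗ R) ◁ (α_ A B D).inv ≫ tensorPairing (tensorPairing e₁ e₂) e₃ =
      (α_ P Q R).hom ▷ (A ⊗ B ⊗ D) ≫ tensorPairing e₁ (tensorPairing e₂ e₃) := by
  have hμ : tensorμ (P ⊗ Q) R (A ⊗ B) D ≫ tensorμ P Q A B ▷ (R ⊗ D) =
      ((α_ P Q R).hom ⊗ₘ (α_ A B D).hom) ≫ tensorμ P (Q ⊗ R) A (B ⊗ D) ≫
        (P ⊗ A) ◁ tensorμ Q R B D ≫ (α_ (P ⊗ A) (Q ⊗ B) (R ⊗ D)).inv := by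
    rw [← associator_monoidal_assoc, Iso.hom_inv_id, comp_id]
  have hunit : (λ_ (𝟙_ C)).hom ▷ 𝟙_ C ≫ (λ_ (𝟙_ C)).hom =
      (α_ (𝟙_ C) (𝟙_ C) (𝟙_ C)).hom ≫ 𝟙_ C ◁ (λ_ (𝟙_ C)).hom ≫ (λ_ (𝟙_ C)).hom := by
    monoidal
  have hsplit₁ : (tensorμ P Q A B ≫ (e₁ ⊗ₘ e₂) ≫ (λ_ (𝟙_ C)).hom) ⊗ₘ e₃ =
      tensorμ P Q A B ▷ (R ⊗ D) ≫ ((e₁ ⊗ₘ e₂) ⊗ₘ e₃) ≫ (λ_ (𝟙_ C)).hom ▷ 𝟙_ C := by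
    simp only [← tensorHom_id, tensorHom_comp_tensorHom, id_comp, comp_id]
  have hsplit₂ : e₁ ⊗ₘ (tensorμ Q R B D ≫ (e₂ ⊗ₘ e₃) ≫ (λ_ (𝟙_ C)).hom) =
      (P ⊗ A) ◁ tensorμ Q R B D ≫ (e₁ ⊗ₘ (e₂ ⊗ₘ e₃)) ≫ 𝟙_ C ◁ (λ_ (𝟙_ C)).hom := by
    simp only [← id_tensorHom, tensorHom_comp_tensorHom, id_comp, comp_id]
  simp only [tensorPairing, hsplit₁, hsplit₂, assoc, hunit]
  rw [associator_naturality_assoc, reassoc_of% hμ, tensorHom_def', assoc,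
    whiskerLeft_inv_hom_assoc]
  simp

lemma tensorPairing_unit_left {N P A : C} (η : 𝟙_ C ⟶ N) (e₀ : N ⊗ 𝟙_ C ⟶ 𝟙_ C)
    (e₁ : P ⊗ A ⟶ 𝟙_ C) (hη : η ▷ 𝟙_ C ≫ e₀ = (λ_ (𝟙_ C)).hom) :
    (η ▷ P) ▷ A ≫ (N ⊗ P) ◁ (λ_ A).inv ≫ tensorPairing e₀ e₁ = (λ_ P).hom ▷ A ≫ e₁ := by
  rw [← whisker_exchange_assoc, tensorPairing, ← tensorHom_id η P, tensorμ_natural_left_assoc,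
    tensorHom_comp_tensorHom_assoc, hη, id_whiskerRight, id_comp, tensorμ,
    braiding_tensorUnit_right, tensorHom_def]
  monoidal

lemma tensorPairing_unit_right {N P A : C} (η : 𝟙_ C ⟶ N) (e₀ : N ⊗ 𝟙_ C ⟶ 𝟙_ C)
    (e₁ : P ⊗ A ⟶ 𝟙_ C) (hη : η ▷ 𝟙_ C ≫ e₀ = (λ_ (𝟙_ C)).hom) :
    (P ◁ η) ▷ A ≫ (P ⊗ N) ◁ (ρ_ A).inv ≫ tensorPairing e₁ e₀ = (ρ_ P).hom ▷ A ≫ e₁ := by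
  rw [← whisker_exchange_assoc, tensorPairing, ← id_tensorHom P η, tensorμ_natural_left_assoc,
    tensorHom_comp_tensorHom_assoc, hη, id_whiskerRight, id_comp, tensorμ,
    braiding_tensorUnit_left, tensorHom_def]
  monoidal

end Braided

section Symmetric

variable [SymmetricCategory C]

lemma tensorμ_braiding (P Q A B : C) :
    tensorμ P Q A B ≫ (β_ (P ⊗ A) (Q ⊗ B)).hom =
      ((β_ P Q).hom ⊗ₘ (β_ A B).hom) ≫ tensorμ Q P B A := by
  calc _ = 𝟙 _ ⊗≫ P ◁ ((β_ Q A).hom ≫ (β_ A Q).hom) ▷ B ⊗≫ (β_ P Q).hom ▷ A ▷ B ⊗≫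
          Q ◁ P ◁ (β_ A B).hom ⊗≫ Q ◁ (β_ P B).hom ▷ A ⊗≫ 𝟙 _ := by
        simp only [tensorμ, braiding_tensor_right_hom, braiding_tensor_left_hom]
        monoidal
    _ = _ := by
        rw [SymmetricCategory.symmetry, tensorHom_def, tensorμ]
        monoidal

lemma tensorHom_braiding_tensorPairing {P Q A B : C} (e₁ : P ⊗ A ⟶ 𝟙_ C)
    (e₂ : Q ⊗ B ⟶ 𝟙_ C) :
    ((β_ P Q).hom ⊗ₘ (β_ A B).hom) ≫ tensorPairing e₂ e₁ = tensorPairing e₁ e₂ := by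
  rw [tensorPairing, ← reassoc_of% tensorμ_braiding, ← braiding_naturality_assoc,
    braiding_leftUnitor, ← unitors_equal, tensorPairing]

end Symmetric

end CategoryTheory.MonoidalCategory

namespace SymmetricPicard

variable {C : Type u} [Groupoid.{v} C] [MonoidalCategory C] [SymmetricCategory C]
  [SymmetricPicard C]

noncomputable def tensorRightEquivalence (c : C) : C ≌ C :=
  CategoryTheory.Equivalence.mk (tensorRight c) (tensorRight (dual c))
    ((rightUnitorNatIso C).symm ≪≫
      (tensoringRight C).mapIso (j c ≪≫ β_ (dual c) c) ≪≫ tensorRightTensor c (dual c))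
    ((tensorRightTensor (dual c) c).symm ≪≫
      (tensoringRight C).mapIso (j c).symm ≪≫ rightUnitorNatIso C)

instance (c : C) : (tensorRight c).IsEquivalence :=
  (tensorRightEquivalence c).isEquivalence_functor

lemma dualHom_spec {a b : C} (f : a ⟶ b) :
    (j b).hom ≫ (dualHom f ⊗ₘ inv f) = (j a).hom := by
  refine Classical.epsilon_spec (p := fun g => (j b).hom ≫ (g ⊗ₘ inv f) = (j a).hom) ?_
  obtain ⟨g, hg⟩ := (tensorRight b).map_surjective ((j b).inv ≫ (j a).hom ≫ (dual a ◁ f))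
  refine ⟨g, ?_⟩
  rw [MonoidalCategory.tensorHom_def, show g ▷ b = _ from hg]
  simp [← MonoidalCategory.whiskerLeft_comp]

lemma kappa_spec (a b : C) :
    kappa a b ▷ (b ⊗ a) ≫ (j (b ⊗ a)).inv = pairing a b := by
  rw [← tensorHom_id]
  refine Classical.epsilon_spec
    (p := fun f => (f ⊗ₘ 𝟙 (b ⊗ a)) ≫ (j (b ⊗ a)).inv = pairing a b) ?_
  obtain ⟨g, hg⟩ := (tensorRight (b ⊗ a)).map_surjective (pairing a b ≫ (j (b ⊗ a)).hom)
  exact ⟨g, by rw [tensorHom_id, show g ▷ (b ⊗ a) = _ from hg, assoc, Iso.hom_inv_id, comp_id]⟩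

lemma pairing_eq_nestedPairing (a b : C) : pairing a b = nestedPairing (j a).inv (j b).inv := by
  simp [pairing, nestedPairing]

lemma hom_ext_dual {c X : C} {u v : X ⟶ dual c}
    (h : u ▷ c ≫ (j c).inv = v ▷ c ≫ (j c).inv) : u = v :=
  (tensorRight c).map_injective (cancel_mono _ |>.mp h)

lemma invMap_whiskerRight_comp {a b : C} (f : a ⟶ b) :
    invMap f ▷ b ≫ (j b).inv = dual a ◁ inv f ≫ (j a).inv := by
  have h : (j a).hom ≫ (dualHom (inv f) ⊗ₘ f) = (j b).hom := by
    simpa only [IsIso.inv_inv] using dualHom_spec (inv f)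
  have h' : (j b).inv = inv (dualHom (inv f) ⊗ₘ f) ≫ (j a).inv := by
    rw [← cancel_epi (j b).hom, Iso.hom_inv_id, ← h, assoc, IsIso.hom_inv_id_assoc,
      Iso.hom_inv_id]
  rw [invMap, h', inv_tensor, MonoidalCategory.tensorHom_def, assoc, ← comp_whiskerRight_assoc,
    IsIso.hom_inv_id, id_whiskerRight, id_comp]

lemma invMap_hom_whiskerRight_comp {a b : C} (e : a ≅ b) :
    invMap e.hom ▷ b ≫ (j b).inv = dual a ◁ e.inv ≫ (j a).inv := by
  rw [invMap_whiskerRight_comp, IsIso.Iso.inv_hom]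

lemma invMu_whiskerRight_comp (a b : C) :
    invMu a b ▷ (a ⊗ b) ≫ (j (a ⊗ b)).inv = tensorPairing (j a).inv (j b).inv := by
  rw [invMu, comp_whiskerRight, assoc, kappa_spec, pairing_eq_nestedPairing, nestedPairing_eq,
    ← whisker_exchange_assoc, ← tensorHom_def'_assoc, tensorHom_braiding_tensorPairing]

lemma invMap_id (a : C) : invMap (𝟙 a) = 𝟙 (dual a) :=
  hom_ext_dual (by simp [invMap_whiskerRight_comp])

lemma invMap_comp {a b c : C} (f : a ⟶ b) (g : b ⟶ c) :
    invMap (f ≫ g) = invMap f ≫ invMap g := by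
  refine hom_ext_dual ?_
  rw [invMap_whiskerRight_comp, comp_whiskerRight, assoc, invMap_whiskerRight_comp,
    ← whisker_exchange_assoc, invMap_whiskerRight_comp, IsIso.inv_comp,
    MonoidalCategory.whiskerLeft_comp, assoc]

lemma invMu_natural {a a' b b' : C} (f : a ⟶ a') (g : b ⟶ b') :
    (invMap f ⊗ₘ invMap g) ≫ invMu a' b' = invMu a b ≫ invMap (f ⊗ₘ g) := by
  refine hom_ext_dual ?_
  rw [comp_whiskerRight, assoc, invMu_whiskerRight_comp, tensorHom_whiskerRight_tensorPairing,
    invMap_whiskerRight_comp, invMap_whiskerRight_comp, ← whiskerLeft_tensorHom_tensorPairing,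
    comp_whiskerRight, assoc, invMap_whiskerRight_comp, inv_tensor, ← whisker_exchange_assoc,
    invMu_whiskerRight_comp]

noncomputable def unitIso : 𝟙_ C ≅ dual (𝟙_ C) :=
  j (𝟙_ C) ≪≫ ρ_ (dual (𝟙_ C))

lemma unitIso_hom_whiskerRight_comp :
    unitIso.hom ▷ 𝟙_ C ≫ (j (𝟙_ C)).inv = (λ_ (𝟙_ C)).hom := by
  rw [unitIso, Iso.trans_hom, comp_whiskerRight, assoc,
    show (ρ_ (dual (𝟙_ C))).hom ▷ 𝟙_ C = (ρ_ (dual (𝟙_ C) ⊗ 𝟙_ C)).hom by monoidal,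
    rightUnitor_naturality_assoc, Iso.hom_inv_id, comp_id, unitors_equal]

lemma invMu_associativity (a b c : C) :
    (invMu a b ⊗ₘ 𝟙 (dual c)) ≫ invMu (a ⊗ b) c ≫ invMap (α_ a b c).hom =
      (α_ (dual a) (dual b) (dual c)).hom ≫ (𝟙 (dual a) ⊗ₘ invMu b c) ≫ invMu a (b ⊗ c) := by
  refine hom_ext_dual ?_
  simp only [comp_whiskerRight, assoc]
  rw [invMap_hom_whiskerRight_comp, ← whisker_exchange_assoc, invMu_whiskerRight_comp,
    ← whisker_exchange_assoc, tensorHom_whiskerRight_tensorPairing, invMu_whiskerRight_comp,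
    invMu_whiskerRight_comp, tensorHom_whiskerRight_tensorPairing, invMu_whiskerRight_comp]
  simp only [id_whiskerRight, id_comp]
  exact tensorPairing_assoc _ _ _

lemma invMu_left_unitality (a : C) :
    (λ_ (dual a)).hom = (unitIso.hom ⊗ₘ 𝟙 (dual a)) ≫ invMu (𝟙_ C) a ≫ invMap (λ_ a).hom := by
  refine hom_ext_dual ?_
  simp only [comp_whiskerRight, assoc, tensorHom_id]
  rw [invMap_hom_whiskerRight_comp, ← whisker_exchange_assoc, invMu_whiskerRight_comp,
    tensorPairing_unit_left _ _ _ unitIso_hom_whiskerRight_comp]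

lemma invMu_right_unitality (a : C) :
    (ρ_ (dual a)).hom = (𝟙 (dual a) ⊗ₘ unitIso.hom) ≫ invMu a (𝟙_ C) ≫ invMap (ρ_ a).hom := by
  refine hom_ext_dual ?_
  simp only [comp_whiskerRight, assoc, id_tensorHom]
  rw [invMap_hom_whiskerRight_comp, ← whisker_exchange_assoc, invMu_whiskerRight_comp,
    tensorPairing_unit_right _ _ _ unitIso_hom_whiskerRight_comp]

lemma invMu_braiding (a b : C) :
    (β_ (dual a) (dual b)).hom ≫ invMu b a = invMu a b ≫ invMap (β_ a b).hom := by
  refine hom_ext_dual ?_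
  simp only [comp_whiskerRight, assoc]
  rw [invMap_hom_whiskerRight_comp, ← whisker_exchange_assoc, invMu_whiskerRight_comp,
    invMu_whiskerRight_comp, ← tensorHom_braiding_tensorPairing (j a).inv, tensorHom_def', assoc,
    whiskerLeft_inv_hom_assoc]

/-- The assignment `inv : a ↦ a^•`, `f ↦ (f⁻¹)^•` is a functor `C ⥤ C` and admits a
braided (symmetric) strong monoidal structure whose structure morphism at `(a, b)` is
`s_{a^•,b^•} ≫ κ_{b,a} : a^• ⊗ b^• ⟶ (a ⊗ b)^•`:  it is functorial, the structure
morphisms are natural isomorphisms, there is a (necessarily invertible) unit comparison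
morphism making the lax monoidal associativity and unitality axioms hold, and the
structure is compatible with the braidings. -/
theorem statement6 :
    -- functoriality of `inv`
    (∀ a : C, invMap (𝟙 a) = 𝟙 (dual a)) ∧
    (∀ {a b c : C} (f : a ⟶ b) (g : b ⟶ c), invMap (f ≫ g) = invMap f ≫ invMap g) ∧
    -- naturality of the structure morphisms
    (∀ {a a' b b' : C} (f : a ⟶ a') (g : b ⟶ b'),
        (invMap f ⊗ₘ invMap g) ≫ invMu a' b' = invMu a b ≫ invMap (f ⊗ₘ g)) ∧
    -- strong: the structure morphisms are isomorphisms
    (∀ a b : C, IsIso (invMu a b)) ∧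
    -- unit comparison isomorphism and the monoidal coherence axioms
    (∃ ε : 𝟙_ C ≅ dual (𝟙_ C),
       (∀ a b c : C,
          (invMu a b ⊗ₘ 𝟙 (dual c)) ≫ invMu (a ⊗ b) c ≫ invMap (α_ a b c).hom =
            (α_ (dual a) (dual b) (dual c)).hom ≫ (𝟙 (dual a) ⊗ₘ invMu b c) ≫
              invMu a (b ⊗ c)) ∧
       (∀ a : C, (λ_ (dual a)).hom =
          (ε.hom ⊗ₘ 𝟙 (dual a)) ≫ invMu (𝟙_ C) a ≫ invMap (λ_ a).hom) ∧
       (∀ a : C, (ρ_ (dual a)).hom =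
          (𝟙 (dual a) ⊗ₘ ε.hom) ≫ invMu a (𝟙_ C) ≫ invMap (ρ_ a).hom)) ∧
    -- the monoidal structure is braided (symmetric)
    (∀ a b : C,
        (β_ (dual a) (dual b)).hom ≫ invMu b a = invMu a b ≫ invMap (β_ a b).hom) :=
  ⟨invMap_id, invMap_comp, invMu_natural, fun _ _ => inferInstance,
    ⟨unitIso, invMu_associativity, invMu_left_unitality, invMu_right_unitality⟩, invMu_braiding⟩

end SymmetricPicard
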